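/- arXiv:1702.01523 — 4 statements merged into one kernel-verified Lean document; each statement's English description precedes it below -/
import Mathlib

section
/- Let A be a 3×3 unitary matrix with all entries nonzero and |a_{22}| ≠ 1. Suppose λ ∈ ℂ with |λ| = 1 satisfies λ = -(a_{12}a_{23} - a_{13}a_{22})/a_{13} = -(a_{21}a_{32} - a_{22}a_{31})/a_{31}. Set ã₁ = a_{11} - a_{13}a_{21}/a_{23} and ã₂ = a_{33} - a_{23}a_{31}/a_{21}, and for φ₁, φ₃ ∈ ℂ define Ψ(x) = ((ã₁⁻¹λ)^x φ₁, -(a_{13}/(a_{12}a_{23}))·(a_{21}(ã₁⁻¹λ)^x φ₁ + a_{23}(ã₂λ⁻¹)^x φ₃), (ã₂λ⁻¹)^x φ₃) for x ∈ ℤ. Then Ψ satisfies the eigenvalue equation U_A Ψ = λΨ. -/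
/-!
`Ψ` is the sum of two plane waves `x ↦ z ^ x • v`: one with `z = ã₁⁻¹λ`, `v = (φ₁, *, 0)` and
one with `z = ã₂λ⁻¹`, `v = (0, *, φ₃)`. A plane wave is an eigenfunction of `U_A` with eigenvalue
`λ` as soon as `(z (Av)₁, (Av)₂, z⁻¹ (Av)₃) = λ v`, and for these two waves this follows from the
two expressions for `λ`, which together give `a₁₂a₂₃a₃₁ = a₁₃a₂₁a₃₂`. The integer powers require
`ã₁, ã₂ ≠ 0`: up to sign, `ã₁a₂₃` and `ã₂a₂₁` are cofactors of `A`, and the adjugate of a unitary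
matrix is `det A • A⋆`, whose entries are all nonzero here.
-/

open Complex Matrix Finset

noncomputable def walk (A : Matrix (Fin 3) (Fin 3) ℂ) (Ψ : ℤ → Fin 3 → ℂ) : ℤ → Fin 3 → ℂ :=
  fun x => ![∑ j, A 0 j * Ψ (x + 1) j, ∑ j, A 1 j * Ψ x j, ∑ j, A 2 j * Ψ (x - 1) j]

namespace Matrix

variable {n α : Type*} [Fintype n] [DecidableEq n]

theorem adjugate_eq_det_smul_star_of_mem_unitaryGroup [CommRing α] [StarRing α]
    {A : Matrix n n α} (hA : A ∈ unitaryGroup n α) : adjugate A = A.det • star A :=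
  calc adjugate A = (star A * A) * adjugate A := by rw [hA.1, one_mul]
    _ = A.det • star A := by rw [mul_assoc, mul_adjugate, mul_smul_comm, mul_one]

theorem adjugate_apply_ne_zero_of_mem_unitaryGroup [Field α] [StarRing α]
    {A : Matrix n n α} (hA : A ∈ unitaryGroup n α) {i j : n} (h : A j i ≠ 0) :
    adjugate A i j ≠ 0 := by
  rw [adjugate_eq_det_smul_star_of_mem_unitaryGroup hA, smul_apply, star_apply, smul_eq_mul]
  exact mul_ne_zero (UnitaryGroup.det_isUnit ⟨A, hA⟩).ne_zero (star_ne_zero.mpr h)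

end Matrix

noncomputable def aTilde₁ (A : Matrix (Fin 3) (Fin 3) ℂ) : ℂ := A 0 0 - A 0 2 * A 1 0 / A 1 2

noncomputable def aTilde₂ (A : Matrix (Fin 3) (Fin 3) ℂ) : ℂ := A 2 2 - A 1 2 * A 2 0 / A 1 0

section Unitary

variable {A : Matrix (Fin 3) (Fin 3) ℂ} (hA : A ∈ unitaryGroup (Fin 3) ℂ)
include hA

lemma aTilde₁_ne_zero (h12 : A 1 2 ≠ 0) (h21 : A 2 1 ≠ 0) : aTilde₁ A ≠ 0 := by
  intro h
  apply adjugate_apply_ne_zero_of_mem_unitaryGroup hA h21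
  rw [aTilde₁, sub_eq_zero, eq_div_iff h12] at h
  simp only [adjugate_fin_three, of_apply, cons_val', cons_val_zero, cons_val_one, cons_val_fin_one,
    Matrix.cons_val]
  linear_combination -h

lemma aTilde₂_ne_zero (h10 : A 1 0 ≠ 0) (h01 : A 0 1 ≠ 0) : aTilde₂ A ≠ 0 := by
  intro h
  apply adjugate_apply_ne_zero_of_mem_unitaryGroup hA h01
  rw [aTilde₂, sub_eq_zero, eq_div_iff h10] at h
  simp only [adjugate_fin_three, of_apply, cons_val', cons_val_zero, cons_val_one, cons_val_fin_one]
  linear_combination -h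

end Unitary

lemma walk_add (A : Matrix (Fin 3) (Fin 3) ℂ) (Ψ Φ : ℤ → Fin 3 → ℂ) :
    walk A (Ψ + Φ) = walk A Ψ + walk A Φ := by
  funext x i
  fin_cases i <;> simp [walk, mul_add, Finset.sum_add_distrib]

noncomputable def planeWave (z : ℂ) (v : Fin 3 → ℂ) : ℤ → Fin 3 → ℂ := fun x => z ^ x • v

section PlaneWave

variable {A : Matrix (Fin 3) (Fin 3) ℂ} {z lam : ℂ}

lemma walk_planeWave (hz : z ≠ 0) (v : Fin 3 → ℂ) (x : ℤ) :
    walk A (planeWave z v) x = z ^ x • ![z * (A *ᵥ v) 0, (A *ᵥ v) 1, z⁻¹ * (A *ᵥ v) 2] := by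
  have hrow (i : Fin 3) (y : ℤ) : ∑ j, A i j * planeWave z v y j = z ^ y * (A *ᵥ v) i := by
    simp only [planeWave, Pi.smul_apply, smul_eq_mul, mulVec, dotProduct, Finset.mul_sum]
    exact Finset.sum_congr rfl fun j _ => by ring
  simp only [walk, hrow, zpow_add_one₀ hz, zpow_sub_one₀ hz]
  ext i; fin_cases i <;> simp [mul_assoc, mul_comm z]

lemma walk_planeWave_eq_smul (hz : z ≠ 0) {v : Fin 3 → ℂ} (h0 : z * (A *ᵥ v) 0 = lam * v 0)
    (h1 : (A *ᵥ v) 1 = lam * v 1) (h2 : (A *ᵥ v) 2 = lam * z * v 2) :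
    walk A (planeWave z v) = lam • planeWave z v := by
  funext x i
  rw [walk_planeWave hz]
  fin_cases i <;> simp [planeWave, h0, h1, h2] <;> field_simp

variable (h01 : A 0 1 ≠ 0) (h12 : A 1 2 ≠ 0)
  (hlam : lam * A 0 2 = A 0 2 * A 1 1 - A 0 1 * A 1 2)
  (hcycle : A 0 1 * A 1 2 * A 2 0 = A 0 2 * A 1 0 * A 2 1)
include h01 h12 hlam hcycle

lemma walk_planeWave₁_eq_smul (ha1₀ : aTilde₁ A ≠ 0) (hlam₀ : lam ≠ 0) (φ₁ : ℂ) :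
    walk A (planeWave ((aTilde₁ A)⁻¹ * lam)
        ![φ₁, -(A 0 2 / (A 0 1 * A 1 2)) * (A 1 0 * φ₁), 0]) =
      lam • planeWave ((aTilde₁ A)⁻¹ * lam)
        ![φ₁, -(A 0 2 / (A 0 1 * A 1 2)) * (A 1 0 * φ₁), 0] := by
  refine walk_planeWave_eq_smul (mul_ne_zero (inv_ne_zero ha1₀) hlam₀) ?_ ?_ ?_ <;>
    simp only [mulVec, dotProduct, Fin.sum_univ_three, cons_val_zero, cons_val_one, Matrix.cons_val,
      neg_mul, mul_neg, mul_zero, add_zero] <;> field_simp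
  · rw [aTilde₁]; field_simp; ring
  · linear_combination A 1 0 * φ₁ * hlam
  · linear_combination φ₁ * hcycle

lemma walk_planeWave₃_eq_smul (ha2₀ : aTilde₂ A ≠ 0) (hlam₀ : lam ≠ 0) (h10 : A 1 0 ≠ 0)
    (φ₃ : ℂ) :
    walk A (planeWave (aTilde₂ A * lam⁻¹)
        ![0, -(A 0 2 / (A 0 1 * A 1 2)) * (A 1 2 * φ₃), φ₃]) =
      lam • planeWave (aTilde₂ A * lam⁻¹)
        ![0, -(A 0 2 / (A 0 1 * A 1 2)) * (A 1 2 * φ₃), φ₃] := by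
  refine walk_planeWave_eq_smul (mul_ne_zero ha2₀ (inv_ne_zero hlam₀)) ?_ ?_ ?_ <;>
    simp only [mulVec, dotProduct, Fin.sum_univ_three, cons_val_zero, cons_val_one, Matrix.cons_val,
      neg_mul, mul_neg, mul_zero, zero_add] <;> field_simp
  · simp
  · linear_combination φ₃ * hlam
  · rw [aTilde₂]; field_simp
    linear_combination φ₃ * hcycle

end PlaneWave

theorem type1_eigenfunction_general (A : Matrix (Fin 3) (Fin 3) ℂ)
    (hA : A ∈ Matrix.unitaryGroup (Fin 3) ℂ)
    (hne : ∀ i j, A i j ≠ 0)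
    (lam : ℂ) (habs : ‖lam‖ = 1)
    (h1 : lam = -(A 0 1 * A 1 2 - A 0 2 * A 1 1) / A 0 2)
    (h2 : lam = -(A 1 0 * A 2 1 - A 1 1 * A 2 0) / A 2 0)
    (φ₁ φ₃ : ℂ)
    (a1 a2 : ℂ) (ha1 : a1 = A 0 0 - A 0 2 * A 1 0 / A 1 2)
    (ha2 : a2 = A 2 2 - A 1 2 * A 2 0 / A 1 0)
    (Ψ : ℤ → Fin 3 → ℂ)
    (hΨ : Ψ = fun x => ![(a1⁻¹ * lam) ^ x * φ₁,
      -(A 0 2 / (A 0 1 * A 1 2)) * (A 1 0 * (a1⁻¹ * lam) ^ x * φ₁ + A 1 2 * (a2 * lam⁻¹) ^ x * φ₃),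
      (a2 * lam⁻¹) ^ x * φ₃]) :
    walk A Ψ = fun x i => lam * Ψ x i := by
  have hlam₀ : lam ≠ 0 := norm_ne_zero_iff.mp (habs ▸ one_ne_zero)
  have hlam₁ : lam * A 0 2 = A 0 2 * A 1 1 - A 0 1 * A 1 2 := by
    rw [h1]; field_simp [hne 0 2]; ring
  have hlam₂ : lam * A 2 0 = A 1 1 * A 2 0 - A 1 0 * A 2 1 := by
    rw [h2]; field_simp [hne 2 0]; ring
  have hcycle : A 0 1 * A 1 2 * A 2 0 = A 0 2 * A 1 0 * A 2 1 := by
    linear_combination A 2 0 * hlam₁ - A 0 2 * hlam₂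
  obtain rfl : a1 = aTilde₁ A := ha1
  obtain rfl : a2 = aTilde₂ A := ha2
  have hsplit : Ψ =
      planeWave ((aTilde₁ A)⁻¹ * lam) ![φ₁, -(A 0 2 / (A 0 1 * A 1 2)) * (A 1 0 * φ₁), 0] +
        planeWave (aTilde₂ A * lam⁻¹) ![0, -(A 0 2 / (A 0 1 * A 1 2)) * (A 1 2 * φ₃), φ₃] := by
    subst hΨ; funext x i; fin_cases i <;>
      simp only [Pi.add_apply, planeWave, smul_cons, smul_eq_mul, Matrix.smul_empty, cons_val_zero,
        cons_val_one, Matrix.cons_val, Fin.zero_eta, Fin.mk_one, Fin.reduceFinMk] <;> ring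
  rw [hsplit, walk_add,
    walk_planeWave₁_eq_smul (hne 0 1) (hne 1 2) hlam₁ hcycle
      (aTilde₁_ne_zero hA (hne 1 2) (hne 2 1)) hlam₀,
    walk_planeWave₃_eq_smul (hne 0 1) (hne 1 2) hlam₁ hcycle
      (aTilde₂_ne_zero hA (hne 1 0) (hne 0 1)) hlam₀ (hne 1 0), ← smul_add]
  rfl

theorem type1_eigenfunction (A : Matrix (Fin 3) (Fin 3) ℂ)
    (hA : A ∈ Matrix.unitaryGroup (Fin 3) ℂ)
    (hne : ∀ i j, A i j ≠ 0) (h22 : ‖A 1 1‖ ≠ 1)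
    (lam : ℂ) (habs : ‖lam‖ = 1)
    (h1 : lam = -(A 0 1 * A 1 2 - A 0 2 * A 1 1) / A 0 2)
    (h2 : lam = -(A 1 0 * A 2 1 - A 1 1 * A 2 0) / A 2 0)
    (φ₁ φ₃ : ℂ)
    (a1 a2 : ℂ) (ha1 : a1 = A 0 0 - A 0 2 * A 1 0 / A 1 2)
    (ha2 : a2 = A 2 2 - A 1 2 * A 2 0 / A 1 0)
    (Ψ : ℤ → Fin 3 → ℂ)
    (hΨ : Ψ = fun x => ![(a1⁻¹ * lam) ^ x * φ₁,
      -(A 0 2 / (A 0 1 * A 1 2)) * (A 1 0 * (a1⁻¹ * lam) ^ x * φ₁ + A 1 2 * (a2 * lam⁻¹) ^ x * φ₃),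
      (a2 * lam⁻¹) ^ x * φ₃]) :
    walk A Ψ = fun x i => lam * Ψ x i :=
  type1_eigenfunction_general A hA hne lam habs h1 h2 φ₁ φ₃ a1 a2 ha1 ha2 Ψ hΨ
end

section
/- Let ω = e^{2πi/3} and A_F = (1/√3)[[1,1,1],[1,ω,ω²],[1,ω²,ω]] be the 3×3 Fourier matrix. For any φ₁, φ₃ ∈ ℂ, the function Ψ(x) = (ω^x φ₁, -(ω^{x+1}φ₁ + φ₃), φ₃) for x ∈ ℤ satisfies U_{A_F}Ψ = iΨ. -/
open Complex Matrix Finset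

noncomputable def ω : ℂ := Complex.exp (2 * Real.pi * Complex.I / 3)

noncomputable def fourierMatrix : Matrix (Fin 3) (Fin 3) ℂ :=
  (1 / Real.sqrt 3 : ℂ) • !![1, 1, 1; 1, ω, ω ^ 2; 1, ω ^ 2, ω]

/-!
Only `ω³ = 1` matters for the walk: for any cube root of unity `ζ` and any scalar `s`,
the state `x ↦ (ζˣ φ₁, -(ζˣ⁺¹ φ₁ + φ₃), φ₃)` is an eigenfunction of the walk with coin
`s • [[1,1,1],[1,ζ,ζ²],[1,ζ²,ζ]]`, with eigenvalue `s (ζ - ζ²)`. For `ζ = ω` and `s = 1/√3`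
this eigenvalue is `i`, since `ω - ω² = i√3`.
-/

noncomputable def type1State (ζ φ₁ φ₃ : ℂ) : ℤ → Fin 3 → ℂ :=
  fun x => ![ζ ^ x * φ₁, -(ζ ^ (x + 1) * φ₁ + φ₃), φ₃]

theorem walk_type1State {ζ : ℂ} (hζ : ζ ^ 3 = 1) (s φ₁ φ₃ : ℂ) :
    walk (s • !![1, 1, 1; 1, ζ, ζ ^ 2; 1, ζ ^ 2, ζ]) (type1State ζ φ₁ φ₃) =
      fun x i => s * (ζ - ζ ^ 2) * type1State ζ φ₁ φ₃ x i := by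
  have hζ0 : ζ ≠ 0 := by rintro rfl; norm_num at hζ
  have hinv : ζ⁻¹ = ζ ^ 2 := inv_eq_of_mul_eq_one_right (by linear_combination hζ)
  funext x i
  fin_cases i <;>
    simp only [walk, type1State, Fin.isValue, Matrix.smul_apply, of_apply, cons_val', cons_val_fin_one,
      cons_val_zero, cons_val_one, Matrix.cons_val, smul_eq_mul, Fin.sum_univ_three, mul_one, neg_add_rev,
      zpow_add_one₀ hζ0, zpow_sub_one₀ hζ0, hinv, sub_add_cancel, Fin.zero_eta, Fin.mk_one, Fin.reduceFinMk]
  · ring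
  · linear_combination -s * ζ ^ x * φ₁ * hζ
  · ring

theorem ω_eq : ω = -1 / 2 + (Real.sqrt 3 / 2 : ℝ) * I := by
  have harg : 2 * (Real.pi : ℂ) * I / 3 = ((Real.pi - Real.pi / 3 : ℝ) : ℂ) * I := by
    push_cast; ring
  rw [ω, harg, exp_mul_I, ← ofReal_cos, ← ofReal_sin, Real.cos_pi_sub, Real.sin_pi_sub,
    Real.cos_pi_div_three, Real.sin_pi_div_three]
  push_cast; ring

theorem ω_pow_three : ω ^ 3 = 1 := by
  unfold ω
  simpa using (isPrimitiveRoot_exp 3 (by norm_num)).pow_eq_one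

theorem ω_sub_ω_sq : ω - ω ^ 2 = Real.sqrt 3 * I := by
  have h3 : ((Real.sqrt 3 : ℝ) : ℂ) ^ 2 = 3 := by
    rw [← ofReal_pow, Real.sq_sqrt (by norm_num)]; norm_num
  rw [ω_eq]
  push_cast
  linear_combination (-I ^ 2 / 4) * h3 - (3 / 4 : ℂ) * I_sq

theorem fourier_type1_eigenfunction (φ₁ φ₃ : ℂ)
    (Ψ : ℤ → Fin 3 → ℂ)
    (hΨ : Ψ = fun x => ![ω ^ x * φ₁, -(ω ^ (x + 1) * φ₁ + φ₃), φ₃]) :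
    walk fourierMatrix Ψ = fun x i => Complex.I * Ψ x i := by
  have heigen : (1 / Real.sqrt 3 : ℂ) * (ω - ω ^ 2) = I := by
    have hs : ((Real.sqrt 3 : ℝ) : ℂ) ≠ 0 := by simp
    rw [ω_sub_ω_sq]; field_simp
  subst hΨ
  have h := walk_type1State ω_pow_three (1 / Real.sqrt 3 : ℂ) φ₁ φ₃
  rw [heigen] at h
  exact h
end

section
/- Let ω = e^{2πi/3}. With Ψ(x) = (ω^x φ₁, -(ω^{x+1}φ₁ + φ₃), φ₃) and the choice φ₁ = ω, φ₃ = ω², the measure μ(x) = ‖Ψ(x)‖² = 2(2 + Re(ω^x)) satisfies μ(x) = 6 if x ≡ 0 (mod 3) and μ(x) = 3 if x ≡ 1 or 2 (mod 3). In particular, μ is a non-uniform stationary measure of the three-state Fourier walk with period 3. -/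
/-!
Writing `Ψ(x)` as `(ω^{x+1}, -ω²(ω^x + 1), ω²)`, the outer entries have modulus one and the middle
one has squared modulus `|ω^x + 1|² = 2 + 2 Re ω^x`, since `|ω^x| = 1`. As `ω³ = 1`, `Re ω^x` only
depends on `x mod 3`: it is `1` on multiples of three and `Re ω = Re ω² = -1/2` otherwise.
-/

open Complex Matrix Finset

theorem zpow_eq_zpow_emod_of_pow_eq_one {G₀ : Type*} [GroupWithZero G₀] {a : G₀} {n : ℕ}
    (h : a ^ n = 1) (x : ℤ) : a ^ x = a ^ (x % n) := by
  rcases eq_or_ne n 0 with rfl | hn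
  · simp
  have ha : a ≠ 0 := ne_zero_pow hn (by simp [h])
  conv_lhs => rw [← Int.emod_add_mul_ediv x n]
  rw [zpow_add₀ ha, _root_.zpow_mul, zpow_natCast, h, _root_.one_zpow, mul_one]

theorem Complex.sq_norm_add_one_of_norm_eq_one {z : ℂ} (hz : ‖z‖ = 1) :
    ‖z + 1‖ ^ 2 = 2 * (1 + z.re) := by
  rw [Complex.sq_norm, normSq_add, ← Complex.sq_norm, hz]
  simp only [one_pow, map_one, mul_one]
  ring

theorem sum_sq_norm_fourier_eigenfunction {ζ : ℂ} (hζ : ‖ζ‖ = 1) (x : ℤ) :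
    ∑ i, ‖![ζ ^ x * ζ, -(ζ ^ (x + 1) * ζ + ζ ^ 2), ζ ^ 2] i‖ ^ 2 = 2 * (2 + (ζ ^ x).re) := by
  have hζx : ‖ζ ^ x‖ = 1 := by rw [norm_zpow, hζ, _root_.one_zpow]
  have hmiddle : -(ζ ^ (x + 1) * ζ + ζ ^ 2) = -(ζ ^ 2 * (ζ ^ x + 1)) := by
    rw [zpow_add_one₀ (norm_ne_zero_iff.mp (hζ ▸ one_ne_zero))]
    ring
  simp only [Fin.sum_univ_three, cons_val_zero, cons_val_one, cons_val_two, head_cons,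
    tail_cons, hmiddle, norm_neg, norm_mul, norm_pow, hζ, hζx, one_pow, one_mul, mul_one]
  rw [Complex.sq_norm_add_one_of_norm_eq_one hζx]
  ring

theorem ω_isPrimitiveRoot : IsPrimitiveRoot ω 3 := Complex.isPrimitiveRoot_exp 3 (by norm_num)

theorem norm_ω : ‖ω‖ = 1 := ω_isPrimitiveRoot.norm'_eq_one (by norm_num)

theorem ω_zpow_eq_zpow_emod (x : ℤ) : ω ^ x = ω ^ (x % 3) :=
  zpow_eq_zpow_emod_of_pow_eq_one ω_isPrimitiveRoot.pow_eq_one x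

theorem re_ω : ω.re = -(1 / 2) := by
  rw [ω, exp_re]
  have hre : (2 * (Real.pi : ℂ) * I / 3).re = 0 := by simp
  have him : (2 * (Real.pi : ℂ) * I / 3).im = 2 * Real.pi / 3 := by simp
  rw [hre, him, show 2 * Real.pi / 3 = Real.pi - Real.pi / 3 by ring, Real.cos_pi_sub,
    Real.cos_pi_div_three, Real.exp_zero, one_mul]

theorem re_ω_sq : (ω ^ (2 : ℤ)).re = -(1 / 2) := by
  have hinv : ω ^ (2 : ℤ) = ω⁻¹ := by
    refine eq_inv_of_mul_eq_one_left ?_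
    rw [← zpow_add_one₀ (ω_isPrimitiveRoot.ne_zero (by norm_num))]
    exact_mod_cast ω_isPrimitiveRoot.pow_eq_one
  rw [hinv, inv_eq_conj norm_ω, conj_re, re_ω]

theorem re_ω_zpow_of_emod_eq_zero {x : ℤ} (hx : x % 3 = 0) : (ω ^ x).re = 1 := by
  rw [ω_zpow_eq_zpow_emod, hx, zpow_zero, one_re]

theorem re_ω_zpow_of_emod_ne_zero {x : ℤ} (hx : x % 3 = 1 ∨ x % 3 = 2) :
    (ω ^ x).re = -(1 / 2) := by
  rw [ω_zpow_eq_zpow_emod]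
  rcases hx with h | h <;> rw [h]
  · rw [zpow_one, re_ω]
  · exact re_ω_sq

theorem fourier_periodic_stationary_measure
    (Ψ : ℤ → Fin 3 → ℂ)
    (hΨ : Ψ = fun x => ![ω ^ x * ω, -(ω ^ (x + 1) * ω + ω ^ 2), ω ^ 2])
    (μ : ℤ → ℝ) (hμ : μ = fun x => ∑ i, ‖Ψ x i‖ ^ 2) :
    (∀ x : ℤ, μ x = 2 * (2 + (ω ^ x).re)) ∧
    (∀ x : ℤ, x % 3 = 0 → μ x = 6) ∧
    (∀ x : ℤ, x % 3 = 1 ∨ x % 3 = 2 → μ x = 3) ∧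
    (∀ x : ℤ, μ (x + 3) = μ x) ∧
    ¬ (∀ x y : ℤ, μ x = μ y) := by
  subst hΨ
  have hμ_eq (x : ℤ) : μ x = 2 * (2 + (ω ^ x).re) := by
    rw [hμ]
    exact sum_sq_norm_fourier_eigenfunction norm_ω x
  have hμ_zero (x : ℤ) (hx : x % 3 = 0) : μ x = 6 := by
    rw [hμ_eq, re_ω_zpow_of_emod_eq_zero hx]
    norm_num
  have hμ_nonzero (x : ℤ) (hx : x % 3 = 1 ∨ x % 3 = 2) : μ x = 3 := by
    rw [hμ_eq, re_ω_zpow_of_emod_ne_zero hx]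
    norm_num
  refine ⟨hμ_eq, hμ_zero, hμ_nonzero, fun x => ?_, fun hconst => ?_⟩
  · rw [hμ_eq, hμ_eq, ω_zpow_eq_zpow_emod, Int.add_emod_right, ← ω_zpow_eq_zpow_emod]
  · have h36 := (hμ_zero 0 rfl).symm.trans ((hconst 0 1).trans (hμ_nonzero 1 (.inl rfl)))
    norm_num at h36
end

section
/- Let A be a 3×3 unitary matrix with all entries a_{ij} nonzero and |a_{22}| ≠ 1. Suppose λ ∈ ℂ with |λ| = 1 satisfies λ = (a_{11}a_{22} - a_{12}a_{21})/a_{11} = (a_{22}a_{33} - a_{23}a_{32})/a_{33}, and set ã₁ = a_{13} - a_{11}a_{23}/a_{21}, ã₂ = a_{31} - a_{21}a_{33}/a_{23}, and assume λ² = ã₁ã₂. Let φ : ℤ → ℂ be any function not identically zero. Then Ψ(x) = (φ(x), -(a_{11}/(a_{12}a_{21}))·(a_{21}φ(x) + a_{23}(ã₁⁻¹λ)φ(x-1)), (ã₁⁻¹λ)φ(x-1)) satisfies U_A Ψ = λΨ. -/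
/-!
Write `Ψ(x) = (φ(x), ψ(x), c φ(x-1))` with `c = ã₁⁻¹λ`. Each row of `U_A Ψ = λΨ` reduces to one
hypothesis. The middle row is how `ψ` is chosen, since `λ - a₂₂ = -a₁₂a₂₁/a₁₁`. In the top row the
`ψ`-terms cancel `a₁₁φ(x+1)` and leave `ã₁cφ(x) = λφ(x)`. In the bottom row the `φ(x-2)`-terms cancel
because equating the two formulas for `λ` gives `a₁₁a₂₃a₃₂ = a₁₂a₂₁a₃₃`, which leaves
`ã₂φ(x-1) = λcφ(x-1)`, i.e. `λ² = ã₁ã₂`.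
-/

open Complex Matrix Finset

noncomputable def type2Ansatz (A : Matrix (Fin 3) (Fin 3) ℂ) (c : ℂ) (φ : ℤ → ℂ) : ℤ → Fin 3 → ℂ :=
  fun x => ![φ x,
    -(A 0 0 / (A 0 1 * A 1 0)) * (A 1 0 * φ x + A 1 2 * c * φ (x - 1)),
    c * φ (x - 1)]

section Ansatz

variable {A : Matrix (Fin 3) (Fin 3) ℂ} {c : ℂ} {φ : ℤ → ℂ} {x : ℤ}

theorem walk_type2Ansatz_zero (h01 : A 0 1 ≠ 0) (h10 : A 1 0 ≠ 0) :
    walk A (type2Ansatz A c φ) x 0 = (A 0 2 - A 0 0 * A 1 2 / A 1 0) * c * φ x := by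
  simp only [walk, type2Ansatz, Fin.sum_univ_three, cons_val_zero, cons_val_one, Matrix.cons_val,
    add_sub_cancel_right]
  field_simp
  ring

theorem walk_type2Ansatz_one (h00 : A 0 0 ≠ 0) (h01 : A 0 1 ≠ 0) (h10 : A 1 0 ≠ 0) {lam : ℂ}
    (h1 : lam = (A 0 0 * A 1 1 - A 0 1 * A 1 0) / A 0 0) :
    walk A (type2Ansatz A c φ) x 1 = lam * type2Ansatz A c φ x 1 := by
  subst h1
  simp only [walk, type2Ansatz, Fin.sum_univ_three, cons_val_zero, cons_val_one, Matrix.cons_val,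
    add_sub_cancel_right]
  field_simp
  ring

theorem walk_type2Ansatz_two (h01 : A 0 1 ≠ 0) (h10 : A 1 0 ≠ 0) (h12 : A 1 2 ≠ 0)
    (hminors : A 0 0 * A 1 2 * A 2 1 = A 0 1 * A 1 0 * A 2 2) :
    walk A (type2Ansatz A c φ) x 2 = (A 2 0 - A 1 0 * A 2 2 / A 1 2) * φ (x - 1) := by
  simp only [walk, type2Ansatz, Fin.sum_univ_three, cons_val_zero, cons_val_one, Matrix.cons_val,
    add_sub_cancel_right]
  field_simp
  linear_combination (-(A 1 0 * φ (x - 1)) - A 1 2 * c * φ (x - 1 - 1)) * hminors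

end Ansatz

theorem mul_mul_eq_of_lam_eq_div {A : Matrix (Fin 3) (Fin 3) ℂ} {lam : ℂ}
    (h00 : A 0 0 ≠ 0) (h22 : A 2 2 ≠ 0)
    (h1 : lam = (A 0 0 * A 1 1 - A 0 1 * A 1 0) / A 0 0)
    (h2 : lam = (A 1 1 * A 2 2 - A 1 2 * A 2 1) / A 2 2) :
    A 0 0 * A 1 2 * A 2 1 = A 0 1 * A 1 0 * A 2 2 := by
  rw [eq_div_iff h00] at h1
  rw [eq_div_iff h22] at h2
  linear_combination A 0 0 * h2 - A 2 2 * h1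

theorem type2_eigenfunction_general (A : Matrix (Fin 3) (Fin 3) ℂ)
    (hne : ∀ i j, A i j ≠ 0)
    (lam : ℂ) (habs : ‖lam‖ = 1)
    (h1 : lam = (A 0 0 * A 1 1 - A 0 1 * A 1 0) / A 0 0)
    (h2 : lam = (A 1 1 * A 2 2 - A 1 2 * A 2 1) / A 2 2)
    (a1 a2 : ℂ) (ha1 : a1 = A 0 2 - A 0 0 * A 1 2 / A 1 0)
    (ha2 : a2 = A 2 0 - A 1 0 * A 2 2 / A 1 2)
    (hsq : lam ^ 2 = a1 * a2)
    (φ : ℤ → ℂ)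
    (Ψ : ℤ → Fin 3 → ℂ)
    (hΨ : Ψ = fun x => ![φ x,
      -(A 0 0 / (A 0 1 * A 1 0)) * (A 1 0 * φ x + A 1 2 * (a1⁻¹ * lam) * φ (x - 1)),
      (a1⁻¹ * lam) * φ (x - 1)]) :
    walk A Ψ = fun x i => lam * Ψ x i := by
  have hlam : lam ≠ 0 := norm_ne_zero_iff.mp (habs ▸ one_ne_zero)
  have ha1_ne : a1 ≠ 0 := by
    rintro rfl
    exact hlam (pow_eq_zero_iff two_ne_zero |>.mp (by rw [hsq, zero_mul]))
  obtain rfl : Ψ = type2Ansatz A (a1⁻¹ * lam) φ := hΨ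
  have row0 (x : ℤ) : walk A (type2Ansatz A (a1⁻¹ * lam) φ) x 0 =
      lam * type2Ansatz A (a1⁻¹ * lam) φ x 0 := by
    rw [walk_type2Ansatz_zero (hne 0 1) (hne 1 0), ← ha1, mul_inv_cancel_left₀ ha1_ne]
    rfl
  have row2 (x : ℤ) : walk A (type2Ansatz A (a1⁻¹ * lam) φ) x 2 =
      lam * type2Ansatz A (a1⁻¹ * lam) φ x 2 := by
    rw [walk_type2Ansatz_two (hne 0 1) (hne 1 0) (hne 1 2)
      (mul_mul_eq_of_lam_eq_div (hne 0 0) (hne 2 2) h1 h2), ← ha2]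
    simp only [type2Ansatz, Matrix.cons_val_two, Matrix.tail_cons, Matrix.head_cons]
    field_simp
    linear_combination (-φ (x - 1)) * hsq
  funext x i
  fin_cases i
  exacts [row0 x, walk_type2Ansatz_one (hne 0 0) (hne 0 1) (hne 1 0) h1, row2 x]

theorem type2_eigenfunction (A : Matrix (Fin 3) (Fin 3) ℂ)
    (hA : A ∈ Matrix.unitaryGroup (Fin 3) ℂ)
    (hne : ∀ i j, A i j ≠ 0) (h22 : ‖A 1 1‖ ≠ 1)
    (lam : ℂ) (habs : ‖lam‖ = 1)
    (h1 : lam = (A 0 0 * A 1 1 - A 0 1 * A 1 0) / A 0 0)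
    (h2 : lam = (A 1 1 * A 2 2 - A 1 2 * A 2 1) / A 2 2)
    (a1 a2 : ℂ) (ha1 : a1 = A 0 2 - A 0 0 * A 1 2 / A 1 0)
    (ha2 : a2 = A 2 0 - A 1 0 * A 2 2 / A 1 2)
    (hsq : lam ^ 2 = a1 * a2)
    (φ : ℤ → ℂ) (hφ : ∃ x, φ x ≠ 0)
    (Ψ : ℤ → Fin 3 → ℂ)
    (hΨ : Ψ = fun x => ![φ x,
      -(A 0 0 / (A 0 1 * A 1 0)) * (A 1 0 * φ x + A 1 2 * (a1⁻¹ * lam) * φ (x - 1)),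
      (a1⁻¹ * lam) * φ (x - 1)]) :
    walk A Ψ = fun x i => lam * Ψ x i :=
  type2_eigenfunction_general A hne lam habs h1 h2 a1 a2 ha1 ha2 hsq φ Ψ hΨ
end
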